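/- arXiv:2304.10697 — 2 statements merged into one kernel-verified Lean document; each statement's English description precedes it below -/
import Mathlib

section
/- Let g ∈ GL_n(ℂ) with g = b ẘ b' (b, b' upper triangular, ẘ the signed permutation matrix of w) such that b_{w(k),w(k)} b'_{k,k} > 0 for 1 ≤ k ≤ n. Then for all 1 ≤ k ≤ n, Δ_{w⁻¹([k])}(ι(g)) = ∏_{i=1}^{k} (b'_{w⁻¹(i),w⁻¹(i)} b_{i,i})⁻¹ > 0, where ι(g) = δₙ g⁻¹ δₙ. -/
open Matrix BigOperators

noncomputable section

/-- `z` is a positive real number (as a complex number). -/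
def IsPosReal (z : ℂ) : Prop := ∃ r : ℝ, 0 < r ∧ z = (r : ℂ)

/-- The left-justified minor of `A` with rows the elements of `S` (in increasing order)
and columns `{0, ..., S.card - 1}`. -/
def lminor {n : ℕ} (A : Matrix (Fin n) (Fin n) ℂ) (S : Finset (Fin n)) : ℂ :=
  (A.submatrix (⇑(S.orderEmbOfFin rfl))
    (Fin.castLE (by simpa using S.card_le_univ))).det

/-- `W` is the signed permutation matrix `ẘ` of `w`. -/
def IsSignedPermMatrix {n : ℕ} (w : Equiv.Perm (Fin n)) (W : Matrix (Fin n) (Fin n) ℂ) : Prop :=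
  (∀ i j, (i = w j → W i j = 1 ∨ W i j = -1) ∧ (i ≠ w j → W i j = 0)) ∧
  ∀ S : Finset (Fin n), ∃ r : ℝ, 0 ≤ r ∧ lminor W S = (r : ℂ)

/-- The set `w([k]) = {w(1), ..., w(k)}`. -/
def wSet {n : ℕ} (w : Equiv.Perm (Fin n)) (k : ℕ) (hk : k ≤ n) : Finset (Fin n) :=
  Finset.image (fun j : Fin k => w (Fin.castLE hk j)) Finset.univ

/-- The diagonal matrix `δₙ = Diag(1, -1, 1, ..., (-1)^{n-1})`. -/
def deltaMat (n : ℕ) : Matrix (Fin n) (Fin n) ℂ :=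
  Matrix.diagonal fun i => (-1 : ℂ) ^ (i : ℕ)

/-!
Since `ẘ⁻¹ = ẘᵀ`, we have `ι(g) = (δ b'⁻¹ δ) (δ ẘᵀ δ) (δ b⁻¹ δ)`: the outer factors are upper
triangular with diagonals `b'ᵢᵢ⁻¹` and `bᵢᵢ⁻¹`, and the middle one is supported on the graph of
`w⁻¹`. For such a product `U P V` the first `k` columns of `P V` vanish outside the rows
`u([k])`, so `Δ_{u([k])}(U P V)` is the product of the diagonal entries of `U` on `u([k])`, of
`Δ_{u([k])}(P)` and of the first `k` diagonal entries of `V`.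

It remains to see that `Δ_{w⁻¹([k])}(δ ẘᵀ δ) = 1`. For a matrix `M` supported on the graph of
`u`, Laplace expansion along column `j` gives `Δ_{u([j+1])}(M) = ε_j(M) Δ_{u([j])}(M)` with a
signed entry `ε_j(M) = ±M_{u(j),j}` (`signedPivot`). The minors `Δ_{w([j])}(ẘ)` are `±1` and
nonnegative, so all `ε_j(ẘ) = 1`; and `ε_k(δ ẘᵀ δ) = ε_{w⁻¹(k)}(ẘ)`, because the two sign counts
correspond under `w`.
-/

open Finset

lemma IsPosReal.mul {z z' : ℂ} (h : IsPosReal z) (h' : IsPosReal z') : IsPosReal (z * z') := by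
  obtain ⟨r, hr, rfl⟩ := h
  obtain ⟨r', hr', rfl⟩ := h'
  exact ⟨r * r', mul_pos hr hr', by push_cast; ring⟩

lemma IsPosReal.inv {z : ℂ} (h : IsPosReal z) : IsPosReal z⁻¹ := by
  obtain ⟨r, hr, rfl⟩ := h
  exact ⟨r⁻¹, inv_pos.2 hr, (Complex.ofReal_inv r).symm⟩

lemma IsPosReal.ne_zero {z : ℂ} (h : IsPosReal z) : z ≠ 0 := by
  obtain ⟨r, hr, rfl⟩ := h
  exact_mod_cast hr.ne'

lemma isPosReal_prod {ι : Type*} (s : Finset ι) {f : ι → ℂ}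
    (h : ∀ i ∈ s, IsPosReal (f i)) : IsPosReal (∏ i ∈ s, f i) :=
  prod_induction f IsPosReal (fun _ _ => IsPosReal.mul) ⟨1, one_pos, by simp⟩ h

namespace Matrix

lemma BlockTriangular.nonsing_inv {R m α : Type*} [CommRing R] [Fintype m] [DecidableEq m]
    [LinearOrder α] {B : Matrix m m R} {b : m → α} (hB : B.BlockTriangular b) :
    B⁻¹.BlockTriangular b := by
  by_cases hdet : IsUnit B.det
  · let := B.invertibleOfIsUnitDet hdet
    exact blockTriangular_inv_of_blockTriangular hB
  · rw [nonsing_inv_apply_not_isUnit B hdet]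
    exact fun _ _ _ => rfl

lemma inv_apply_self_of_upperTriangular {K m : Type*} [Field K] [Fintype m] [LinearOrder m]
    [DecidableEq m] {B : Matrix m m K} (hB : B.BlockTriangular id) (hdiag : ∀ i, B i i ≠ 0)
    (i : m) : B⁻¹ i i = (B i i)⁻¹ := by
  have hdet : IsUnit B.det := by
    rw [det_of_isUpperTriangular hB]
    exact isUnit_iff_ne_zero.2 (prod_ne_zero_iff.2 fun j _ => hdiag j)
  have h1 : (B * B⁻¹) i i = 1 := by rw [mul_nonsing_inv _ hdet, one_apply_eq]
  rw [mul_apply, sum_eq_single i] at h1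
  · exact eq_inv_of_mul_eq_one_right h1
  · intro j _ hji
    rcases lt_or_gt_of_ne hji with hlt | hlt
    · rw [hB hlt, zero_mul]
    · rw [hB.nonsing_inv hlt, mul_zero]
  · exact fun hi => absurd (mem_univ i) hi

lemma det_submatrix_of_upperTriangular {R m k : Type*} [CommRing R] [LinearOrder m] [Fintype k]
    [LinearOrder k] {B : Matrix m m R} (hB : B.BlockTriangular id) {f : k → m}
    (hf : StrictMono f) : (B.submatrix f f).det = ∏ r, B (f r) (f r) :=
  det_of_isUpperTriangular fun _ _ hij => hB (hf hij)

lemma submatrix_mul_of_injective {R : Type*} [CommSemiring R] {l m o l' o' κ : Type*}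
    [Fintype m] [Fintype κ] {A : Matrix l m R} {B : Matrix m o R} (f : l' → l) {e : κ → m}
    (he : Function.Injective e) (g : o' → o)
    (h : ∀ r c j, j ∉ Set.range e → A (f r) j * B j (g c) = 0) :
    (A * B).submatrix f g = A.submatrix f e * B.submatrix e g := by
  ext r c
  exact (Fintype.sum_of_injective e he _ _ (h r c) fun _ => rfl).symm

end Matrix

lemma Finset.exists_orderEmbOfFin_insert {α : Type*} [LinearOrder α] {S : Finset α} {c : α}
    (h : (insert c S).card = S.card + 1) :
    ∃ p : Fin (S.card + 1), (p : ℕ) = #{x ∈ S | x < c} ∧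
      (insert c S).orderEmbOfFin h p = c ∧
      ∀ r, (insert c S).orderEmbOfFin h (p.succAbove r) = S.orderEmbOfFin rfl r := by
  set e := (insert c S).orderEmbOfFin h
  have hrange : Set.range e = insert c (S : Set α) := by
    rw [Finset.range_orderEmbOfFin, Finset.coe_insert]
  obtain ⟨p, hp⟩ : c ∈ Set.range e := by rw [hrange]; exact Set.mem_insert c _
  have hS : ∀ r, e (p.succAbove r) ∈ S := fun r =>
    ((Set.ext_iff.1 hrange _).1 ⟨_, rfl⟩).resolve_left fun h' =>
      p.succAbove_ne r (e.injective (h'.trans hp.symm))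
  refine ⟨p, ?_, hp, fun r => congrFun (orderEmbOfFin_unique rfl hS
    (e.strictMono.comp (Fin.strictMono_succAbove p))) r⟩
  have hbelow : {x ∈ S | x < c} = (Iio p).image e := by
    ext x
    simp only [mem_filter, mem_image, mem_Iio]
    constructor
    · rintro ⟨hxS, hxc⟩
      obtain ⟨r, rfl⟩ : x ∈ Set.range e := by rw [hrange]; exact Set.mem_insert_of_mem _ hxS
      exact ⟨r, by rwa [← e.lt_iff_lt, hp], rfl⟩
    · rintro ⟨r, hrp, rfl⟩
      have hlt : e r < c := hp ▸ e.strictMono hrp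
      exact ⟨((Set.ext_iff.1 hrange _).1 ⟨r, rfl⟩).resolve_left hlt.ne, hlt⟩
  rw [hbelow, card_image_of_injective _ e.injective, Fin.card_Iio]

lemma Finset.prod_eq_prod_orderEmbOfFin {α M : Type*} [LinearOrder α] [CommMonoid M]
    (S : Finset α) {k : ℕ} (h : S.card = k) (F : α → M) :
    ∏ i ∈ S, F i = ∏ r, F (S.orderEmbOfFin h r) := by
  conv_lhs => rw [← map_orderEmbOfFin_univ S h]
  rw [prod_map]
  rfl

lemma lminor_eq_det {n k : ℕ} (M : Matrix (Fin n) (Fin n) ℂ) (S : Finset (Fin n))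
    (h : S.card = k) (hkn : k ≤ n) :
    lminor M S = (M.submatrix (S.orderEmbOfFin h) (Fin.castLE hkn)).det := by
  subst h
  rfl

lemma lminor_empty {n : ℕ} (M : Matrix (Fin n) (Fin n) ℂ) : lminor M ∅ = 1 := by
  rw [lminor_eq_det M ∅ card_empty n.zero_le, Matrix.det_fin_zero]

lemma lminor_insert {n : ℕ} (M : Matrix (Fin n) (Fin n) ℂ) {S : Finset (Fin n)} {c : Fin n}
    (hc : c ∉ S) (hS : S.card < n) (hcol : ∀ i ∈ S, M i ⟨S.card, hS⟩ = 0) :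
    lminor M (insert c S) =
      (-1) ^ (#{x ∈ S | x < c} + S.card) * M c ⟨S.card, hS⟩ * lminor M S := by
  have hcard : (insert c S).card = S.card + 1 := card_insert_of_notMem hc
  obtain ⟨p, hpc, hp, hsucc⟩ := exists_orderEmbOfFin_insert hcard
  set e := (insert c S).orderEmbOfFin hcard
  rw [lminor_eq_det M _ hcard hS, Matrix.det_succ_column _ (Fin.last S.card),
    sum_eq_single p, lminor_eq_det M S rfl hS.le, hpc]
  · have hminor : ((M.submatrix e (Fin.castLE hS)).submatrix p.succAbove
        (Fin.last S.card).succAbove) = M.submatrix (S.orderEmbOfFin rfl) (Fin.castLE hS.le) := by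
      ext r j
      simp only [Matrix.submatrix_apply, hsucc, Fin.succAbove_last]
      rfl
    rw [hminor, Matrix.submatrix_apply, hp, Fin.val_last]
    rfl
  · intro i _ hip
    have hi : e i ∈ S := (mem_insert.1 (orderEmbOfFin_mem _ _ i)).resolve_left
      fun h => hip (e.injective (h.trans hp.symm))
    rw [Matrix.submatrix_apply, show Fin.castLE hS (Fin.last S.card) = ⟨S.card, hS⟩ from rfl,
      hcol _ hi, mul_zero, zero_mul]
  · exact fun h => absurd (mem_univ p) h

section wSet

variable {n : ℕ} (u : Equiv.Perm (Fin n))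

lemma card_wSet (k : ℕ) (hk : k ≤ n) : (wSet u k hk).card = k := by
  rw [wSet, card_image_of_injective _ fun a b h => Fin.castLE_injective hk (u.injective h),
    card_univ, Fintype.card_fin]

variable {u} in
lemma mem_wSet {k : ℕ} {hk : k ≤ n} {x : Fin n} :
    x ∈ wSet u k hk ↔ (u⁻¹ x : ℕ) < k := by
  constructor
  · intro hx
    obtain ⟨j, -, rfl⟩ := mem_image.1 hx
    simp
  · intro h
    refine mem_image.2 ⟨⟨u⁻¹ x, h⟩, mem_univ _, ?_⟩
    simp [Fin.castLE]

lemma wSet_zero (h : 0 ≤ n) : wSet u 0 h = ∅ := by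
  ext x
  simp [mem_wSet]

lemma wSet_succ (j : Fin n) : wSet u (j + 1) j.isLt = insert (u j) (wSet u j j.isLt.le) := by
  ext x
  rw [mem_wSet, mem_insert, mem_wSet, Nat.lt_succ_iff_lt_or_eq, Fin.val_inj,
    ← Equiv.Perm.eq_inv_iff_eq, inv_inv, or_comm]

lemma apply_notMem_wSet (j : Fin n) : u j ∉ wSet u j j.isLt.le := by
  simp [mem_wSet]

lemma prod_wSet {k : ℕ} (hk : k ≤ n) (F : Fin n → ℂ) :
    ∏ i ∈ wSet u k hk, F i = ∏ j : Fin k, F (u (Fin.castLE hk j)) :=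
  prod_image fun _ _ _ _ h => Fin.castLE_injective hk (u.injective h)

end wSet

def signedPivot {n : ℕ} (u : Equiv.Perm (Fin n)) (M : Matrix (Fin n) (Fin n) ℂ) (j : Fin n) :
    ℂ :=
  (-1) ^ (#{x ∈ wSet u j j.isLt.le | x < u j} + j) * M (u j) j

section signedPivot

variable {n : ℕ} {u : Equiv.Perm (Fin n)} {M : Matrix (Fin n) (Fin n) ℂ}

lemma lminor_wSet_succ (hM : ∀ i j, i ≠ u j → M i j = 0) (j : Fin n) :
    lminor M (wSet u (j + 1) j.isLt) = signedPivot u M j * lminor M (wSet u j j.isLt.le) := by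
  have hcard := card_wSet u j j.isLt.le
  have hS : (wSet u j j.isLt.le).card < n := hcard.trans_lt j.isLt
  have hj : (⟨(wSet u j j.isLt.le).card, hS⟩ : Fin n) = j := Fin.ext hcard
  rw [wSet_succ, lminor_insert M (apply_notMem_wSet u j) hS, hj, hcard, signedPivot]
  intro i hi
  rw [hj]
  exact hM i j fun h => apply_notMem_wSet u j (h ▸ hi)

lemma lminor_wSet_eq_one_of_signedPivot (hM : ∀ i j, i ≠ u j → M i j = 0)
    (h : ∀ j, signedPivot u M j = 1) (k : ℕ) (hk : k ≤ n) : lminor M (wSet u k hk) = 1 := by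
  induction k with
  | zero => rw [wSet_zero, lminor_empty]
  | succ k ih => rw [lminor_wSet_succ (j := ⟨k, hk⟩) hM, h, ih, one_mul]

end signedPivot

lemma deltaMat_conj_apply {n : ℕ} (X : Matrix (Fin n) (Fin n) ℂ) (i j : Fin n) :
    (deltaMat n * X * deltaMat n) i j = (-1) ^ ((i : ℕ) + j) * X i j := by
  simp only [deltaMat, Matrix.diagonal_mul, Matrix.mul_diagonal, pow_add]
  ring

lemma deltaMat_mul_deltaMat (n : ℕ) : deltaMat n * deltaMat n = 1 := by
  rw [deltaMat, Matrix.diagonal_mul_diagonal, ← Matrix.diagonal_one]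
  congr 1
  ext i
  rw [← pow_add, Even.neg_one_pow ⟨i, rfl⟩]

lemma deltaMat_conj_apply_self {n : ℕ} (X : Matrix (Fin n) (Fin n) ℂ) (i : Fin n) :
    (deltaMat n * X * deltaMat n) i i = X i i := by
  rw [deltaMat_conj_apply, Even.neg_one_pow ⟨i, rfl⟩, one_mul]

lemma Matrix.BlockTriangular.deltaMat_conj {n : ℕ} {X : Matrix (Fin n) (Fin n) ℂ}
    (hX : X.BlockTriangular id) : (deltaMat n * X * deltaMat n).BlockTriangular id :=
  fun _ _ h => by rw [deltaMat_conj_apply, hX h, mul_zero]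

lemma card_filter_wSet_inv {n : ℕ} (w : Equiv.Perm (Fin n)) (k : Fin n) :
    #{x ∈ wSet w⁻¹ k k.isLt.le | x < w⁻¹ k} =
      #{y ∈ wSet w (w⁻¹ k) (w⁻¹ k).isLt.le | y < w (w⁻¹ k)} := by
  refine card_bij' (fun x _ => w x) (fun y _ => w⁻¹ y) (fun x hx => ?_) (fun y hy => ?_)
    (by simp) (by simp)
  · simp only [mem_filter, mem_wSet, inv_inv, Equiv.Perm.coe_inv, Equiv.symm_apply_apply,
      Equiv.apply_symm_apply] at hx ⊢
    exact hx.symm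
  · simp only [mem_filter, mem_wSet, inv_inv, Equiv.Perm.coe_inv, Equiv.apply_symm_apply] at hy ⊢
    exact hy.symm

lemma signedPivot_inv_deltaMat_conj_transpose {n : ℕ} (w : Equiv.Perm (Fin n))
    (W : Matrix (Fin n) (Fin n) ℂ) (k : Fin n) :
    signedPivot w⁻¹ (deltaMat n * Wᵀ * deltaMat n) k = signedPivot w W (w⁻¹ k) := by
  simp only [signedPivot, deltaMat_conj_apply, Matrix.transpose_apply]
  rw [card_filter_wSet_inv, ← mul_assoc, ← pow_add]
  simp only [Equiv.Perm.coe_inv, Equiv.apply_symm_apply]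
  congr 1
  rw [show ∀ a b c : ℕ, a + c + (b + c) = a + b + 2 * c by intros; ring, pow_add, pow_mul]
  simp

namespace IsSignedPermMatrix

variable {n : ℕ} {w : Equiv.Perm (Fin n)} {W : Matrix (Fin n) (Fin n) ℂ}

lemma apply_eq_zero (hW : IsSignedPermMatrix w W) {i j : Fin n} (h : i ≠ w j) : W i j = 0 :=
  (hW.1 i j).2 h

lemma signedPivot_eq_one_or_eq_neg_one (hW : IsSignedPermMatrix w W) (j : Fin n) :
    signedPivot w W j = 1 ∨ signedPivot w W j = -1 := by
  rcases neg_one_pow_eq_or ℂ (#{x ∈ wSet w j j.isLt.le | x < w j} + j) with hs | hs <;>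
    rcases (hW.1 (w j) j).1 rfl with he | he <;> simp [signedPivot, hs, he]

lemma lminor_wSet_eq_one (hW : IsSignedPermMatrix w W) (k : ℕ) (hk : k ≤ n) :
    lminor W (wSet w k hk) = 1 := by
  induction k with
  | zero => rw [wSet_zero, lminor_empty]
  | succ k ih =>
    have hstep := lminor_wSet_succ (j := ⟨k, hk⟩) (fun _ _ => hW.apply_eq_zero)
    rw [ih, mul_one] at hstep
    rcases hW.signedPivot_eq_one_or_eq_neg_one ⟨k, hk⟩ with h | h
    · rw [hstep, h]
    · obtain ⟨r, hr, hre⟩ := hW.2 (wSet w (k + 1) hk)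
      rw [hstep, h] at hre
      have : r = -1 := by exact_mod_cast hre.symm
      linarith

lemma signedPivot_eq_one (hW : IsSignedPermMatrix w W) (j : Fin n) : signedPivot w W j = 1 := by
  have hstep := lminor_wSet_succ (fun _ _ => hW.apply_eq_zero) j
  rwa [hW.lminor_wSet_eq_one, hW.lminor_wSet_eq_one, mul_one, eq_comm] at hstep

lemma deltaMat_conj_transpose_apply_eq_zero (hW : IsSignedPermMatrix w W) {i j : Fin n}
    (h : i ≠ w⁻¹ j) : (deltaMat n * Wᵀ * deltaMat n) i j = 0 := by
  rw [deltaMat_conj_apply, Matrix.transpose_apply, hW.apply_eq_zero, mul_zero]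
  rintro rfl
  simp at h

lemma lminor_deltaMat_conj_transpose_eq_one (hW : IsSignedPermMatrix w W) (k : ℕ) (hk : k ≤ n) :
    lminor (deltaMat n * Wᵀ * deltaMat n) (wSet w⁻¹ k hk) = 1 := by
  refine lminor_wSet_eq_one_of_signedPivot (fun _ _ => hW.deltaMat_conj_transpose_apply_eq_zero)
    (fun j => ?_) k hk
  rw [signedPivot_inv_deltaMat_conj_transpose, hW.signedPivot_eq_one]

lemma inv_eq_transpose (hW : IsSignedPermMatrix w W) : W⁻¹ = Wᵀ := by
  refine Matrix.inv_eq_right_inv ?_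
  ext i i'
  have hoff : ∀ j, j ≠ w⁻¹ i → W i j = 0 := fun j hj =>
    hW.apply_eq_zero fun h => hj (by simp [h])
  rw [Matrix.mul_apply, sum_eq_single (w⁻¹ i) (fun j _ hj => by rw [hoff j hj, zero_mul])
    (by simp), Matrix.transpose_apply, Matrix.one_apply]
  split_ifs with h
  · subst h
    rcases (hW.1 i (w⁻¹ i)).1 (by simp) with h | h <;> rw [h] <;> norm_num
  · rw [hW.apply_eq_zero (i := i') (by simpa using Ne.symm h), mul_zero]

end IsSignedPermMatrix

lemma lminor_mul_mul_wSet {n : ℕ} {U P V : Matrix (Fin n) (Fin n) ℂ} {u : Equiv.Perm (Fin n)}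
    (hU : U.BlockTriangular id) (hV : V.BlockTriangular id) (hP : ∀ i j, i ≠ u j → P i j = 0)
    (k : ℕ) (hk : k ≤ n) :
    lminor (U * P * V) (wSet u k hk) =
      (∏ j : Fin k, U (u (Fin.castLE hk j)) (u (Fin.castLE hk j))) * lminor P (wSet u k hk) *
        ∏ j : Fin k, V (Fin.castLE hk j) (Fin.castLE hk j) := by
  set S := wSet u k hk
  have hS := card_wSet u k hk
  set f := S.orderEmbOfFin hS
  have hPV : ∀ j ∉ S, ∀ m : Fin k, (P * V) j (Fin.castLE hk m) = 0 := by
    intro j hj m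
    rw [Matrix.mul_apply]
    refine sum_eq_zero fun c _ => ?_
    by_cases hc : j = u c
    · subst hc
      have hmc : id (Fin.castLE hk m) < id c := by
        simpa [S, mem_wSet, Fin.lt_def] using lt_of_lt_of_le m.isLt (not_lt.1 (mt mem_wSet.2 hj))
      rw [hV hmc, mul_zero]
    · rw [hP j c hc, zero_mul]
  have hPf : ∀ r j, j ∉ Set.range (Fin.castLE hk) → P (f r) j = 0 := by
    intro r j hj
    refine hP _ _ fun h => hj ⟨⟨u⁻¹ (f r), mem_wSet.1 (orderEmbOfFin_mem S hS r)⟩, ?_⟩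
    simp [h, Fin.castLE]
  rw [lminor_eq_det _ S hS hk, Matrix.mul_assoc,
    Matrix.submatrix_mul_of_injective f f.injective (Fin.castLE hk) fun r m j hj => by
      rw [hPV j (by simpa [f] using hj) m, mul_zero],
    Matrix.submatrix_mul_of_injective f (Fin.castLE_injective hk) (Fin.castLE hk)
      fun r m j hj => by rw [hPf r j hj, zero_mul],
    Matrix.det_mul, Matrix.det_mul, ← lminor_eq_det _ S hS hk,
    Matrix.det_submatrix_of_upperTriangular hU f.strictMono,
    Matrix.det_submatrix_of_upperTriangular hV (Fin.strictMono_castLE hk),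
    ← prod_eq_prod_orderEmbOfFin S hS (fun i => U i i), prod_wSet, mul_assoc]

theorem stmt5_general {n : ℕ} (w : Equiv.Perm (Fin n)) (g b b' W : Matrix (Fin n) (Fin n) ℂ)
    (hW : IsSignedPermMatrix w W)
    (hb : b.BlockTriangular id) (hb' : b'.BlockTriangular id)
    (hg : g = b * W * b')
    (hpos : ∀ k : Fin n, IsPosReal (b (w k) (w k) * b' k k))
    (k : ℕ) (hk : k ≤ n) :
    lminor (deltaMat n * g⁻¹ * deltaMat n) (wSet w⁻¹ k hk) =
      ∏ i : Fin k, (b' (w⁻¹ (Fin.castLE hk i)) (w⁻¹ (Fin.castLE hk i)) *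
        b (Fin.castLE hk i) (Fin.castLE hk i))⁻¹ ∧
    IsPosReal (lminor (deltaMat n * g⁻¹ * deltaMat n) (wSet w⁻¹ k hk)) := by
  have hpos' : ∀ i, IsPosReal (b i i * b' (w⁻¹ i) (w⁻¹ i)) := fun i => by
    simpa using hpos (w⁻¹ i)
  have hbdiag : ∀ i, b i i ≠ 0 := fun i => left_ne_zero_of_mul (hpos' i).ne_zero
  have hb'diag : ∀ i, b' i i ≠ 0 := fun i => right_ne_zero_of_mul (hpos i).ne_zero
  have hiota : deltaMat n * g⁻¹ * deltaMat n = (deltaMat n * b'⁻¹ * deltaMat n) *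
      (deltaMat n * Wᵀ * deltaMat n) * (deltaMat n * b⁻¹ * deltaMat n) := by
    rw [hg, Matrix.mul_inv_rev, Matrix.mul_inv_rev, hW.inv_eq_transpose]
    simp only [Matrix.mul_assoc, ← Matrix.mul_assoc (deltaMat n) (deltaMat n),
      deltaMat_mul_deltaMat, Matrix.one_mul]
  have hformula : lminor (deltaMat n * g⁻¹ * deltaMat n) (wSet w⁻¹ k hk) =
      ∏ i : Fin k, (b' (w⁻¹ (Fin.castLE hk i)) (w⁻¹ (Fin.castLE hk i)) *
        b (Fin.castLE hk i) (Fin.castLE hk i))⁻¹ := by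
    rw [hiota, lminor_mul_mul_wSet hb'.nonsing_inv.deltaMat_conj hb.nonsing_inv.deltaMat_conj
      fun _ _ => hW.deltaMat_conj_transpose_apply_eq_zero,
      hW.lminor_deltaMat_conj_transpose_eq_one, mul_one, ← prod_mul_distrib]
    refine prod_congr rfl fun i _ => ?_
    rw [deltaMat_conj_apply_self, deltaMat_conj_apply_self,
      Matrix.inv_apply_self_of_upperTriangular hb' hb'diag,
      Matrix.inv_apply_self_of_upperTriangular hb hbdiag, mul_inv]
  refine ⟨hformula, hformula ▸ isPosReal_prod _ fun i _ => ?_⟩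
  rw [mul_comm]
  exact (hpos' _).inv

/-- if `g = b ẘ b'` with `b, b'` upper triangular and
`b_{w(k),w(k)} b'_{k,k} > 0` for all `k`, then for all `1 ≤ k ≤ n` the left-justified
minor `Δ_{w⁻¹([k])}(ι(g))` equals `∏_{i=1}^{k} (b'_{w⁻¹(i),w⁻¹(i)} b_{i,i})⁻¹`, which
is a positive real number. -/
theorem stmt5 {n : ℕ} (w : Equiv.Perm (Fin n)) (g b b' W : Matrix (Fin n) (Fin n) ℂ)
    (hW : IsSignedPermMatrix w W)
    (hb : b.BlockTriangular id) (hb' : b'.BlockTriangular id)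
    (hg : g = b * W * b')
    (hpos : ∀ k : Fin n, IsPosReal (b (w k) (w k) * b' k k))
    (k : ℕ) (hk1 : 1 ≤ k) (hk : k ≤ n) :
    lminor (deltaMat n * g⁻¹ * deltaMat n) (wSet w⁻¹ k hk) =
      ∏ i : Fin k, (b' (w⁻¹ (Fin.castLE hk i)) (w⁻¹ (Fin.castLE hk i)) *
        b (Fin.castLE hk i) (Fin.castLE hk i))⁻¹ ∧
    IsPosReal (lminor (deltaMat n * g⁻¹ * deltaMat n) (wSet w⁻¹ k hk)) :=
  stmt5_general w g b b' W hW hb hb' hg hpos k hk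
end
end

section
/- Let M be an n×n Hermitian matrix with M = g·Diag(ν)·g⁻¹ (g unitary), and let M_T = A*MA be its tridiagonalization via the cyclic subspace of e₁. If ν_i is a simple eigenvalue of M that is also an eigenvalue of M_T, and x ∈ ℂ^m is a unit eigenvector of M_T with M_T x = ν_i x, then |x₁| = |g_{1,i}|, i.e., the normalized eigenvectors of M and M_T corresponding to ν_i have the same absolute value of first entry. -/
open Matrix BigOperators

noncomputable section

/-- The Gram–Schmidt orthonormalization of the Krylov vectors
`e₁, M e₁, M² e₁, ...` of a matrix `M`, as vectors in `EuclideanSpace ℂ (Fin (n+1))`. -/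
def krylovGS {n : ℕ} (M : Matrix (Fin (n + 1)) (Fin (n + 1)) ℂ) (m : ℕ) (j : Fin m) :
    EuclideanSpace ℂ (Fin (n + 1)) :=
  @InnerProductSpace.gramSchmidtNormed ℂ (EuclideanSpace ℂ (Fin (n + 1))) _ _ _ (Fin m) _
    (inferInstance : LocallyFiniteOrderBot (Fin m))
    (inferInstance : WellFoundedLT (Fin m))
    (fun l : Fin m =>
      (WithLp.equiv 2 (Fin (n + 1) → ℂ)).symm ((M ^ (l : ℕ)).mulVec (Pi.single 0 1))) j

/-!
The columns of `A` form an orthonormal basis of the Krylov space `K = span {Mʲ e₁}`, which is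
`M`-invariant and has `e₁` as its first basis vector. So `A Aᴴ` is the identity on `K`, and `A x`
is a unit eigenvector of `M` for `νᵢ` with `(A x)₁ = x₁`. Since `νᵢ` is simple, `A x = c • g eᵢ`
with `‖c‖ = 1`, whence `‖x₁‖ = ‖g₁ᵢ‖`.
-/

open Submodule Set Module InnerProductSpace

section Krylov

variable {K V : Type*} [Field K] [AddCommGroup V] [Module K V] {T : V →ₗ[K] V} {v : ℕ → V}

theorem map_span_range_le_of_succ (hv : ∀ j, v (j + 1) = T (v j)) :
    (span K (range v)).map T ≤ span K (range v) := by
  rw [map_span, span_le]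
  rintro _ ⟨_, ⟨j, rfl⟩, rfl⟩
  exact subset_span ⟨j + 1, hv j⟩

theorem span_range_le_of_mem_span_fin (hv : ∀ j, v (j + 1) = T (v j)) {k : ℕ}
    (hk : v k ∈ span K (range fun j : Fin k => v j)) :
    span K (range v) ≤ span K (range fun j : Fin k => v j) := by
  set P := span K (range fun j : Fin k => v j)
  have hmem : ∀ j < k, v j ∈ P := fun j hj => subset_span ⟨⟨j, hj⟩, rfl⟩
  have hinv : P.map T ≤ P := by
    rw [map_span, span_le]
    rintro _ ⟨_, ⟨j, rfl⟩, rfl⟩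
    rw [SetLike.mem_coe, ← hv]
    rcases (Nat.succ_le_of_lt j.isLt).lt_or_eq with hlt | heq
    · exact hmem _ hlt
    · rwa [← Nat.succ_eq_add_one, heq]
  refine span_le.2 (range_subset_iff.2 fun j => ?_)
  induction j with
  | zero =>
    rcases k.eq_zero_or_pos with rfl | hk0
    · exact hk
    · exact hmem 0 hk0
  | succ j ih =>
    rw [hv]
    exact hinv (mem_map_of_mem ih)

theorem linearIndependent_fin_finrank_span_range [FiniteDimensional K V]
    (hv : ∀ j, v (j + 1) = T (v j)) :
    LinearIndependent K fun j : Fin (finrank K (span K (range v))) => v j := by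
  suffices ∀ k ≤ finrank K (span K (range v)), LinearIndependent K fun j : Fin k => v j from
    this _ le_rfl
  intro k
  induction k with
  | zero => intro _; exact linearIndependent_empty_type
  | succ k ih =>
    intro hk
    have hsnoc : (fun j : Fin (k + 1) => v j) = Fin.snoc (fun j : Fin k => v j) (v k) := by
      funext j
      refine Fin.lastCases ?_ (fun j => ?_) j <;> simp
    rw [hsnoc, linearIndependent_finSnoc]
    refine ⟨ih (by omega), fun hmem => ?_⟩
    have hle := Submodule.finrank_mono (span_range_le_of_mem_span_fin hv hmem)
    have hcard := finrank_range_le_card (R := K) (fun j : Fin k => v j)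
    rw [Fintype.card_fin] at hcard
    exact absurd (hle.trans hcard) (by omega)

theorem span_range_fin_finrank_span_range [FiniteDimensional K V]
    (hv : ∀ j, v (j + 1) = T (v j)) :
    span K (range fun j : Fin (finrank K (span K (range v))) => v j) = span K (range v) :=
  eq_of_le_of_finrank_eq (span_mono (range_comp_subset_range _ v))
    ((finrank_span_eq_card (linearIndependent_fin_finrank_span_range hv)).trans
      (Fintype.card_fin _))

end Krylov

theorem gramSchmidtNormed_fin_zero {𝕜 E : Type*} [RCLike 𝕜] [NormedAddCommGroup E]
    [InnerProductSpace 𝕜 E] {m : ℕ} [NeZero m] (f : Fin m → E) :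
    gramSchmidtNormed 𝕜 f 0 = (‖f 0‖ : 𝕜)⁻¹ • f 0 := by
  rw [gramSchmidtNormed, gramSchmidt_def, Finset.Iio_eq_empty.2 fun b _ => Fin.zero_le b,
    Finset.sum_empty, sub_zero]

theorem Matrix.pow_succ_mulVec_eq_mulVecLin {R ι : Type*} [CommSemiring R] [Fintype ι]
    [DecidableEq ι] (M : Matrix ι ι R) (u : ι → R) (j : ℕ) :
    (M ^ (j + 1)) *ᵥ u = M.mulVecLin ((M ^ j) *ᵥ u) := by
  rw [mulVecLin_apply, mulVec_mulVec, pow_succ']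

section KrylovGS

variable {n : ℕ} {M : Matrix (Fin (n + 1)) (Fin (n + 1)) ℂ} {m : ℕ}

theorem krylovGS_eq_gramSchmidtNormed :
    krylovGS M m = gramSchmidtNormed ℂ fun l : Fin m =>
      WithLp.toLp 2 ((M ^ (l : ℕ)) *ᵥ Pi.single 0 1) :=
  rfl

theorem orthonormal_krylovGS
    (hm : m = finrank ℂ (span ℂ (range fun j : ℕ => (M ^ j) *ᵥ Pi.single 0 1))) :
    Orthonormal ℂ (krylovGS M m) := by
  subst hm
  rw [krylovGS_eq_gramSchmidtNormed]
  refine gramSchmidtNormed_orthonormal ?_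
  exact (linearIndependent_fin_finrank_span_range (M.pow_succ_mulVec_eq_mulVecLin _)).map'
    (WithLp.linearEquiv 2 ℂ _).symm.toLinearMap (LinearEquiv.ker _)

theorem span_range_ofLp_krylovGS
    (hm : m = finrank ℂ (span ℂ (range fun j : ℕ => (M ^ j) *ᵥ Pi.single 0 1))) :
    span ℂ (range fun j => (krylovGS M m j).ofLp) =
      span ℂ (range fun j : ℕ => (M ^ j) *ᵥ Pi.single 0 1) := by
  subst hm
  set f := fun l : Fin _ => WithLp.toLp 2 ((M ^ (l : ℕ)) *ᵥ (Pi.single 0 1 : Fin (n + 1) → ℂ))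
  have hspan := congrArg (map (WithLp.linearEquiv 2 ℂ (Fin (n + 1) → ℂ)).toLinearMap)
    ((span_gramSchmidtNormed_range (𝕜 := ℂ) f).trans (span_gramSchmidt ℂ f))
  rw [map_span, map_span, ← range_comp, ← range_comp] at hspan
  rw [krylovGS_eq_gramSchmidtNormed]
  exact hspan.trans (span_range_fin_finrank_span_range (M.pow_succ_mulVec_eq_mulVecLin _))

theorem krylovGS_zero (hm0 : 0 < m) :
    krylovGS M m ⟨0, hm0⟩ = EuclideanSpace.single 0 1 := by
  have : NeZero m := ⟨hm0.ne'⟩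
  rw [krylovGS_eq_gramSchmidtNormed, Fin.mk_zero', gramSchmidtNormed_fin_zero]
  simp only [Fin.val_zero, pow_zero, one_mulVec]
  change (‖EuclideanSpace.single (0 : Fin (n + 1)) (1 : ℂ)‖ : ℂ)⁻¹ •
    EuclideanSpace.single 0 1 = _
  simp

end KrylovGS

section Isometry

variable {R : Type*} [CommRing R] [StarRing R] {ι κ : Type*} [Fintype ι] [Fintype κ]
  [DecidableEq κ] {A : Matrix ι κ R}

theorem Matrix.mulVec_eq_smul_of_conjTranspose_mul_mulVec_eq_smul (hA : Aᴴ * A = 1)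
    {M : Matrix ι ι R}
    (hM : ∀ v ∈ LinearMap.range A.mulVecLin, M *ᵥ v ∈ LinearMap.range A.mulVecLin)
    {μ : R} {x : κ → R} (hx : (Aᴴ * M * A) *ᵥ x = μ • x) :
    M *ᵥ (A *ᵥ x) = μ • (A *ᵥ x) := by
  obtain ⟨w, hw⟩ := hM _ ⟨x, rfl⟩
  simp only [mulVecLin_apply] at hw
  have hwx : w = μ • x := by
    rw [← hx, ← mulVec_mulVec, ← mulVec_mulVec, ← hw, mulVec_mulVec, hA, one_mulVec]
  rw [← hw, hwx, mulVec_smul]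

theorem Matrix.mulVec_apply_eq_of_col_eq_single (hA : Aᴴ * A = 1) [DecidableEq ι] {j : κ}
    {k : ι} (hcol : A.col j = Pi.single k 1) (x : κ → R) : (A *ᵥ x) k = x j := by
  have hrow : A k = (1 : Matrix κ κ R) j := by
    rw [← hA]
    ext l
    have hcol' (k' : ι) : A k' j = (Pi.single k 1 : ι → R) k' := congrFun hcol k'
    simp [mul_apply, hcol', Pi.single_apply, apply_ite star]
  change A k ⬝ᵥ x = x j
  rw [hrow]
  exact congrFun (one_mulVec x) j

end Isometry

section Norm

variable {𝕜 : Type*} [RCLike 𝕜] {ι κ : Type*} [Fintype ι] [DecidableEq κ]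

theorem Matrix.star_dotProduct_self_eq_sum_norm_sq (v : ι → 𝕜) :
    star v ⬝ᵥ v = ((∑ k, ‖v k‖ ^ 2 : ℝ) : 𝕜) := by
  simp [dotProduct, RCLike.conj_mul]

theorem Matrix.sum_norm_sq_mulVec_of_conjTranspose_mul_self [Fintype κ] {A : Matrix ι κ 𝕜}
    (hA : Aᴴ * A = 1) (x : κ → 𝕜) : ∑ k, ‖(A *ᵥ x) k‖ ^ 2 = ∑ j, ‖x j‖ ^ 2 := by
  have h : star (A *ᵥ x) ⬝ᵥ (A *ᵥ x) = star x ⬝ᵥ x := by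
    rw [star_mulVec, dotProduct_mulVec, vecMul_vecMul, hA, vecMul_one]
  rwa [star_dotProduct_self_eq_sum_norm_sq, star_dotProduct_self_eq_sum_norm_sq,
    RCLike.ofReal_inj] at h

theorem Matrix.conjTranspose_mul_self_eq_one_of_orthonormal {A : Matrix ι κ 𝕜}
    (hA : Orthonormal 𝕜 fun j => WithLp.toLp 2 (A.col j)) : Aᴴ * A = 1 := by
  ext j l
  have := orthonormal_iff_ite.1 hA j l
  rw [EuclideanSpace.inner_toLp_toLp, dotProduct_comm] at this
  simpa [mul_apply, dotProduct, one_apply] using this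

end Norm

section Spectral

variable {ι : Type*} [Fintype ι] [DecidableEq ι]

theorem Matrix.eq_mulVec_single_of_mulVec_eq_smul {R : Type*} [Field R] [StarRing R]
    {g : Matrix ι ι R} (hg : g ∈ unitaryGroup ι R) {d : ι → R} {i : ι}
    (hd : ∀ j ≠ i, d j ≠ d i) {y : ι → R} (hy : (g * diagonal d * g⁻¹) *ᵥ y = d i • y) :
    y = g *ᵥ Pi.single i ((gᴴ *ᵥ y) i) := by
  have hgg : gᴴ * g = 1 := mem_unitaryGroup_iff'.1 hg
  have hg' : g * gᴴ = 1 := mem_unitaryGroup_iff.1 hg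
  set w := gᴴ *ᵥ y
  have hw : diagonal d *ᵥ w = d i • w := by
    rw [inv_eq_left_inv hgg, ← mulVec_mulVec, ← mulVec_mulVec] at hy
    rw [← mulVec_smul, ← hy]
    simp only [w, mulVec_mulVec, ← Matrix.mul_assoc, hgg, Matrix.one_mul]
  have hwi : w = Pi.single i (w i) := by
    funext j
    rcases eq_or_ne j i with rfl | hj
    · simp
    · have hj' := congrFun hw j
      rw [mulVec_diagonal, Pi.smul_apply, smul_eq_mul] at hj'
      simpa [hj, hd j hj] using hj'
  rw [← hwi, mulVec_mulVec, hg', one_mulVec]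

theorem Matrix.norm_apply_eq_of_mulVec_eq_smul {𝕜 : Type*} [RCLike 𝕜]
    {g : Matrix ι ι 𝕜} (hg : g ∈ unitaryGroup ι 𝕜) {d : ι → 𝕜} {i : ι}
    (hd : ∀ j ≠ i, d j ≠ d i) {y : ι → 𝕜} (hy : (g * diagonal d * g⁻¹) *ᵥ y = d i • y)
    (hy1 : ∑ k, ‖y k‖ ^ 2 = 1) (k : ι) : ‖y k‖ = ‖g k i‖ := by
  have hyg := eq_mulVec_single_of_mulVec_eq_smul hg hd hy
  set c := (gᴴ *ᵥ y) i
  have hc : ‖c‖ = 1 := by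
    rw [hyg, sum_norm_sq_mulVec_of_conjTranspose_mul_self (mem_unitaryGroup_iff'.1 hg)] at hy1
    have hc2 : ‖c‖ ^ 2 = 1 := by simpa [Pi.single_apply, apply_ite] using hy1
    exact (pow_eq_one_iff_of_nonneg (norm_nonneg c) two_ne_zero).1 hc2
  rw [hyg, mulVec_single]
  simp [hc]

end Spectral

theorem stmt9_general {n : ℕ} (M : Matrix (Fin (n + 1)) (Fin (n + 1)) ℂ)
    (g : Matrix (Fin (n + 1)) (Fin (n + 1)) ℂ)
    (hg : g ∈ Matrix.unitaryGroup (Fin (n + 1)) ℂ)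
    (ν : Fin (n + 1) → ℝ)
    (hspec : M = g * Matrix.diagonal (fun i => (ν i : ℂ)) * g⁻¹)
    (m : ℕ) (hm0 : 0 < m)
    (hm : m = Module.finrank ℂ
      (Submodule.span ℂ (Set.range fun j : ℕ => (M ^ j).mulVec (Pi.single 0 1))))
    (A : Matrix (Fin (n + 1)) (Fin m) ℂ)
    (hA : ∀ i j, A i j = (WithLp.equiv 2 (Fin (n + 1) → ℂ)) (krylovGS M m j) i)
    (i : Fin (n + 1)) (hsimple : ∀ j : Fin (n + 1), j ≠ i → ν j ≠ ν i)
    (x : Fin m → ℂ) (hx : ∑ j, ‖x j‖ ^ 2 = 1)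
    (heig : (Aᴴ * M * A).mulVec x = (ν i : ℂ) • x) :
    ‖x ⟨0, hm0⟩‖ = ‖g 0 i‖ := by
  have hcol : A.col = fun j => (krylovGS M m j).ofLp := funext fun j => funext fun k => hA k j
  have hAA : Aᴴ * A = 1 :=
    conjTranspose_mul_self_eq_one_of_orthonormal (by simpa [hcol] using orthonormal_krylovGS hm)
  have hinv : ∀ v ∈ LinearMap.range A.mulVecLin, M *ᵥ v ∈ LinearMap.range A.mulVecLin := by
    rw [range_mulVecLin, hcol, span_range_ofLp_krylovGS hm]
    exact fun v hv =>
      map_span_range_le_of_succ (M.pow_succ_mulVec_eq_mulVecLin _) (mem_map_of_mem hv)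
  have hcol0 : A.col ⟨0, hm0⟩ = Pi.single 0 1 := by
    simp only [hcol, krylovGS_zero hm0]
    rfl
  have hy := mulVec_eq_smul_of_conjTranspose_mul_mulVec_eq_smul hAA hinv heig
  rw [hspec] at hy
  rw [← mulVec_apply_eq_of_col_eq_single hAA hcol0 x]
  exact norm_apply_eq_of_mulVec_eq_smul hg (fun j hj => by exact_mod_cast hsimple j hj) hy
    ((sum_norm_sq_mulVec_of_conjTranspose_mul_self hAA x).trans hx) 0

/-- let `M = g Diag(ν) g⁻¹` be Hermitian (`g` unitary) with
tridiagonalization `M_T = A* M A` via the cyclic subspace of `e₁`. If `ν_i` is a simple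
eigenvalue of `M` which is also an eigenvalue of `M_T`, and `x` is a unit eigenvector of
`M_T` for `ν_i`, then `|x₁| = |g_{1,i}|`. -/
theorem stmt9 {n : ℕ} (M : Matrix (Fin (n + 1)) (Fin (n + 1)) ℂ) (hM : M.IsHermitian)
    (g : Matrix (Fin (n + 1)) (Fin (n + 1)) ℂ)
    (hg : g ∈ Matrix.unitaryGroup (Fin (n + 1)) ℂ)
    (ν : Fin (n + 1) → ℝ)
    (hspec : M = g * Matrix.diagonal (fun i => (ν i : ℂ)) * g⁻¹)
    (m : ℕ) (hm0 : 0 < m)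
    (hm : m = Module.finrank ℂ
      (Submodule.span ℂ (Set.range fun j : ℕ => (M ^ j).mulVec (Pi.single 0 1))))
    (A : Matrix (Fin (n + 1)) (Fin m) ℂ)
    (hA : ∀ i j, A i j = (WithLp.equiv 2 (Fin (n + 1) → ℂ)) (krylovGS M m j) i)
    (i : Fin (n + 1)) (hsimple : ∀ j : Fin (n + 1), j ≠ i → ν j ≠ ν i)
    (hieig : (ν i : ℂ) ∈ spectrum ℂ (Aᴴ * M * A))
    (x : Fin m → ℂ) (hx : ∑ j, ‖x j‖ ^ 2 = 1)
    (heig : (Aᴴ * M * A).mulVec x = (ν i : ℂ) • x) :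
    ‖x ⟨0, hm0⟩‖ = ‖g 0 i‖ :=
  stmt9_general M g hg ν hspec m hm0 hm A hA i hsimple x hx heig
end
end
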